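/- arXiv:1809.10101 — 13 statements merged into one kernel-verified Lean document; each statement's English description precedes it below -/
import Mathlib

section
/- In a poset, the two defining conditions of modularity are equivalent: for all x,y,z, (x ≤ z implies L(U(x,y),z) = L(U(x,L(y,z)))) holds for all triples if and only if (x ≤ z implies U(x,L(y,z)) = U(L(U(x,y),z))) holds for all triples. -/
lemma ULU {P : Type*} [PartialOrder P] (s : Set P) :
    upperBounds (lowerBounds (upperBounds s)) = upperBounds s :=
  le_antisymm (upperBounds_mono_set (subset_lowerBounds_upperBounds s))
    (subset_upperBounds_lowerBounds (upperBounds s))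

lemma LUL {P : Type*} [PartialOrder P] (s : Set P) :
    lowerBounds (upperBounds (lowerBounds s)) = lowerBounds s :=
  le_antisymm (lowerBounds_mono_set (subset_upperBounds_lowerBounds s))
    (subset_lowerBounds_upperBounds (lowerBounds s))

/-- The two defining conditions of modularity for posets are equivalent. -/
theorem stmt_3 {P : Type*} [PartialOrder P] :
    (∀ x y z : P, x ≤ z →
      lowerBounds (upperBounds {x, y} ∪ {z}) =
        lowerBounds (upperBounds ({x} ∪ lowerBounds {y, z}))) ↔
    (∀ x y z : P, x ≤ z →
      upperBounds ({x} ∪ lowerBounds {y, z}) =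
        upperBounds (lowerBounds (upperBounds {x, y} ∪ {z}))) := by
  constructor
  · intro h x y z hxz
    have := congrArg upperBounds (h x y z hxz)
    rw [ULU] at this
    exact this.symm
  · intro h x y z hxz
    have := congrArg lowerBounds (h x y z hxz)
    rw [LUL] at this
    exact this.symm
end

section
/- Let (P,≤,*,0,1) be a bounded relatively pseudocomplemented poset. Define M(x,y) := L(x,y) and R(x,y) := L(x*y). Then (P,≤,*,M,R,0,1) is an operator residuated poset; in particular, for all x,y,z ∈ P: M(x,1) = M(1,x) = L(x); R(x,y) = P iff x ≤ y; M(x,y) ⊆ L(z) iff L(x) ⊆ R(y,z); and M is commutative. -/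
/-- A bounded relatively pseudocomplemented poset with `M(x,y) := L(x,y)` and
`R(x,y) := L(x*y)` is an operator residuated poset. -/
theorem stmt_5 {P : Type*} [PartialOrder P] (z o : P)
    (hbot : ∀ x : P, z ≤ x) (htop : ∀ x : P, x ≤ o)
    (star : P → P → P)
    (hstar : ∀ a b w : P, lowerBounds {a, w} ⊆ lowerBounds {b} ↔ w ≤ star a b) :
    (∀ x : P, lowerBounds {x, o} = lowerBounds {x} ∧ lowerBounds {o, x} = lowerBounds {x}) ∧
    (∀ x y : P, lowerBounds {star x y} = Set.univ ↔ x ≤ y) ∧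
    (∀ x y w : P,
      lowerBounds {x, y} ⊆ lowerBounds {w} ↔ lowerBounds {x} ⊆ lowerBounds {star y w}) ∧
    (∀ x y : P, lowerBounds ({x, y} : Set P) = lowerBounds {y, x}) := by
  have mem2 : ∀ a b c : P, c ∈ lowerBounds ({a, b} : Set P) ↔ c ≤ a ∧ c ≤ b := by
    intro a b c
    simp [lowerBounds]
  have mem1 : ∀ a c : P, c ∈ lowerBounds ({a} : Set P) ↔ c ≤ a := by
    intro a c; simp [lowerBounds]
  refine ⟨?_, ?_, ?_, ?_⟩
  · intro x
    constructor <;> ext c <;> simp only [mem2, mem1] <;>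
      exact ⟨fun h => by tauto, fun h => ⟨by first | exact h | exact htop c, by
        first | exact h | exact htop c⟩⟩
  · intro x y
    constructor
    · intro h
      have hx : x ≤ star x y := by
        have : x ∈ lowerBounds ({star x y} : Set P) := h ▸ Set.mem_univ x
        exact (mem1 _ _).1 this
      have := (hstar x y x).2 hx
      have hx2 : x ∈ lowerBounds ({x, x} : Set P) := (mem2 _ _ _).2 ⟨le_refl x, le_refl x⟩
      exact (mem1 _ _).1 (this hx2)
    · intro hxy
      ext c
      simp only [mem1, Set.mem_univ, iff_true]
      have : o ≤ star x y := by
        refine (hstar x y o).1 ?_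
        intro d hd
        exact (mem1 _ _).2 (le_trans ((mem2 _ _ _).1 hd).1 hxy)
      exact le_trans (htop c) this
  · intro x y w
    constructor
    · intro h c hc
      rw [mem1] at hc ⊢
      refine (hstar y w c).1 ?_
      intro d hd
      rw [mem2] at hd
      exact h ((mem2 _ _ _).2 ⟨le_trans hd.2 hc, hd.1⟩)
    · intro h d hd
      rw [mem2] at hd
      have : d ≤ star y w := (mem1 _ _).1 (h ((mem1 _ _).2 hd.1))
      have := (hstar y w d).2 this
      exact this ((mem2 _ _ _).2 ⟨hd.2, le_refl d⟩)
  · intro x y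
    ext c
    simp only [mem2]
    tauto
end

section
/- In a bounded relatively pseudocomplemented poset (P,≤,*,0,1), divisibility holds with M(x,y) := L(x,y) and R(x,y) := L(x*y): for all a,b ∈ P, ⋃_{x ∈ L(a*b)} L(x,a) = L(a,b); i.e., M(R(a,b),a) = L(a,b), where M is extended to subsets by unions. -/
/-- Divisibility in bounded relatively pseudocomplemented posets:
`M(R(a,b),a) = L(a,b)`. -/
theorem stmt_6 {P : Type*} [PartialOrder P] (z o : P)
    (hbot : ∀ x : P, z ≤ x) (htop : ∀ x : P, x ≤ o)
    (star : P → P → P)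
    (hstar : ∀ a b w : P, lowerBounds {a, w} ⊆ lowerBounds {b} ↔ w ≤ star a b)
    (a b : P) :
    (⋃ x ∈ lowerBounds {star a b}, lowerBounds {x, a}) = lowerBounds {a, b} := by
  ext u
  simp only [Set.mem_iUnion, lowerBounds, Set.mem_setOf_eq, Set.mem_insert_iff,
    Set.mem_singleton_iff]
  constructor
  · rintro ⟨x, hx, hu⟩
    have hxs : x ≤ star a b := hx rfl
    have hub : u ≤ b := by
      have := (hstar a b x).mpr hxs
      exact this (by rintro t (rfl | rfl)
                     · exact hu (Or.inr rfl)
                     · exact hu (Or.inl rfl)) rfl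
    rintro t (rfl | rfl)
    · exact hu (Or.inr rfl)
    · exact hub
  · intro hu
    refine ⟨u, ?_, ?_⟩
    · rintro t rfl
      exact (hstar a b u).mp (fun t ht => by
        rintro s rfl
        exact le_trans (ht (Or.inr rfl)) (hu (Or.inr rfl)))
    · rintro t (rfl | rfl)
      · exact le_refl _
      · exact hu (Or.inl rfl)
end

section
/- Let (P,≤,',0,1) be a Boolean poset. If U(a',b) = {1}, then a ≤ b. Conversely if a ≤ b then L(U(a',b)) = P. -/
/-- In a Boolean poset: `U(a',b) = {1}` implies `a ≤ b`, and conversely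
`a ≤ b` implies `L(U(a',b)) = P`. -/
theorem stmt_8 {P : Type*} [PartialOrder P] (c : P → P) (z o : P)
    (hbot : ∀ x : P, z ≤ x) (htop : ∀ x : P, x ≤ o)
    (anti : ∀ x y : P, x ≤ y → c y ≤ c x) (inv : ∀ x : P, c (c x) = x)
    (hL : ∀ x : P, lowerBounds {x, c x} = {z})
    (hU : ∀ x : P, upperBounds {x, c x} = {o})
    (hdist : ∀ x y w : P,
      lowerBounds (upperBounds {x, y} ∪ {w}) =
        lowerBounds (upperBounds (lowerBounds {x, w} ∪ lowerBounds {y, w})))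
    (a b : P) :
    (upperBounds {c a, b} = {o} → a ≤ b) ∧
    (a ≤ b → lowerBounds (upperBounds {c a, b}) = Set.univ) := by
  constructor
  · intro hU'
    have h := hdist (c a) b a
    have ha : a ∈ lowerBounds (upperBounds {c a, b} ∪ {a}) := by
      intro x hx
      rcases hx with hx | hx
      · rw [hU'] at hx
        rcases hx with rfl
        exact htop a
      · rw [Set.mem_singleton_iff] at hx
        exact le_of_eq hx.symm
    rw [h] at ha
    have hb : b ∈ upperBounds (lowerBounds {c a, a} ∪ lowerBounds {b, a}) := by
      intro x hx
      rcases hx with hx | hx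
      · rw [Set.pair_comm, hL a] at hx
        rcases hx with rfl
        exact hbot b
      · exact hx (Set.mem_insert _ _)
    exact ha hb
  · intro hab
    have hUeq : upperBounds {c a, b} = {o} := by
      apply Set.Subset.antisymm
      · intro u hu
        have hmem : u ∈ upperBounds {a, c a} := by
          intro x hx
          rcases hx with rfl | hx
          · exact le_trans hab (hu (Set.mem_insert_of_mem _ rfl))
          · rcases hx with rfl
            exact hu (Set.mem_insert _ _)
        rw [hU a] at hmem
        exact hmem
      · intro u hu
        rcases hu with rfl
        intro x _
        exact htop x
    rw [hUeq]
    refine Set.eq_univ_of_forall fun x y hy => ?_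
    rcases hy with rfl
    exact htop x
end

section
/- Let (P,≤,',0,1) be a Boolean poset and define M(x,y) := L(x,y) and R(x,y) := L(U(x',y)). Then operator adjointness holds: for all a,b,c ∈ P, M(a,b) ⊆ L(c) if and only if L(a) ⊆ R(b,c). -/
/-- Operator adjointness in Boolean posets with `M(x,y) := L(x,y)` and
`R(x,y) := L(U(x',y))`. -/
theorem stmt_9 {P : Type*} [PartialOrder P] (c : P → P) (z o : P)
    (hbot : ∀ x : P, z ≤ x) (htop : ∀ x : P, x ≤ o)
    (anti : ∀ x y : P, x ≤ y → c y ≤ c x) (inv : ∀ x : P, c (c x) = x)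
    (hL : ∀ x : P, lowerBounds {x, c x} = {z})
    (hU : ∀ x : P, upperBounds {x, c x} = {o})
    (hdist : ∀ x y w : P,
      lowerBounds (upperBounds {x, y} ∪ {w}) =
        lowerBounds (upperBounds (lowerBounds {x, w} ∪ lowerBounds {y, w})))
    (a b w : P) :
    lowerBounds {a, b} ⊆ lowerBounds {w} ↔
      lowerBounds {a} ⊆ lowerBounds (upperBounds {c b, w}) := by
  constructor
  · intro h x hx
    have hxa : x ≤ a := hx (Set.mem_singleton a)
    intro u hu
    have hcbu : c b ≤ u := hu (Set.mem_insert _ _)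
    have hwu : w ≤ u := hu (Set.mem_insert_of_mem _ rfl)
    have hd := hdist b (c b) x
    rw [hU b] at hd
    have hxL : x ∈ lowerBounds (({o} : Set P) ∪ {x}) := by
      intro s hs
      rcases hs with hs | hs
      · exact hs ▸ htop x
      · exact hs ▸ le_refl x
    rw [hd] at hxL
    apply hxL
    intro t ht
    rcases ht with ht | ht
    · -- t ∈ lowerBounds {b, x}
      have htb : t ≤ b := ht (Set.mem_insert _ _)
      have htx : t ≤ x := ht (Set.mem_insert_of_mem _ rfl)
      have : t ∈ lowerBounds ({a, b} : Set P) := by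
        intro s hs
        rcases hs with hs | hs
        · exact hs ▸ htx.trans hxa
        · exact hs ▸ htb
      exact (h this (Set.mem_singleton w)).trans hwu
    · exact (ht (Set.mem_insert _ _)).trans hcbu
  · intro h x hx
    have hxa : x ≤ a := hx (Set.mem_insert _ _)
    have hxb : x ≤ b := hx (Set.mem_insert_of_mem _ rfl)
    have hx2 : x ∈ lowerBounds (upperBounds {c b, w}) :=
      h (fun s hs => hs ▸ hxa)
    have hd := hdist (c b) w x
    have hxL : x ∈ lowerBounds (upperBounds ({c b, w} : Set P) ∪ {x}) := by
      intro s hs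
      rcases hs with hs | hs
      · exact hx2 hs
      · exact hs ▸ le_refl x
    rw [hd] at hxL
    intro s hs
    rw [Set.mem_singleton_iff] at hs
    subst hs
    apply hxL
    intro t ht
    rcases ht with ht | ht
    · -- t ∈ lowerBounds {c b, x}
      have htcb : t ≤ c b := ht (Set.mem_insert _ _)
      have htx : t ≤ x := ht (Set.mem_insert_of_mem _ rfl)
      have : t ∈ lowerBounds ({b, c b} : Set P) := by
        intro s hs
        rcases hs with hs | hs
        · exact hs ▸ htx.trans hxb
        · exact hs ▸ htcb
      rw [hL b, Set.mem_singleton_iff] at this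
      exact this ▸ hbot s
    · exact ht (Set.mem_insert _ _)
end

section
/- In a Boolean poset (P,≤,',0,1) with M(x,y) := L(x,y) and R(x,y) := L(U(x',y)), divisibility holds: M(R(x,y),x) = L(x,y) for all x,y ∈ P, where M is extended to subsets by M(A,x) := ⋃_{z∈A} M(z,x). -/
/-- Divisibility in Boolean posets: `M(R(x,y),x) = L(x,y)` where
`M(x,y) := L(x,y)`, `R(x,y) := L(U(x',y))`. -/
theorem stmt_10 {P : Type*} [PartialOrder P] (c : P → P) (z o : P)
    (hbot : ∀ x : P, z ≤ x) (htop : ∀ x : P, x ≤ o)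
    (anti : ∀ x y : P, x ≤ y → c y ≤ c x) (inv : ∀ x : P, c (c x) = x)
    (hL : ∀ x : P, lowerBounds {x, c x} = {z})
    (hU : ∀ x : P, upperBounds {x, c x} = {o})
    (hdist : ∀ x y w : P,
      lowerBounds (upperBounds {x, y} ∪ {w}) =
        lowerBounds (upperBounds (lowerBounds {x, w} ∪ lowerBounds {y, w})))
    (x y : P) :
    (⋃ u ∈ lowerBounds (upperBounds {c x, y}), lowerBounds {u, x}) =
      lowerBounds {x, y} := by
  have key := hdist (c x) y x
  have h1 : lowerBounds ({c x, x} : Set P) = {z} := by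
    rw [Set.pair_comm]; exact hL x
  have hzmem : ∀ s : Set P, upperBounds (({z} : Set P) ∪ s) = upperBounds s := by
    intro s
    ext t
    constructor
    · intro ht a ha; exact ht (Or.inr ha)
    · intro ht a ha
      rcases ha with ha | ha
      · rw [Set.mem_singleton_iff.mp ha]; exact hbot t
      · exact ht ha
  have hLUL : ∀ s : Set P,
      lowerBounds (upperBounds (lowerBounds s)) = lowerBounds s := by
    intro s
    apply Set.Subset.antisymm
    · intro t ht a ha
      exact ht (fun b hb => hb ha)
    · intro t ht a ha
      exact ha ht
  calc (⋃ u ∈ lowerBounds (upperBounds {c x, y}), lowerBounds {u, x})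
      = lowerBounds (upperBounds {c x, y} ∪ {x}) := by
        ext t
        simp only [Set.mem_iUnion, exists_prop]
        constructor
        · rintro ⟨u, hu, htu⟩ a ha
          rcases ha with ha | ha
          · exact le_trans (htu (Set.mem_insert u _)) (hu ha)
          · rw [Set.mem_singleton_iff.mp ha]
            exact htu (Set.mem_insert_of_mem _ rfl)
        · intro ht
          refine ⟨t, fun a ha => ht (Or.inl ha), ?_⟩
          intro a ha
          rcases ha with ha | ha
          · rw [Set.mem_singleton_iff.mp ha]
          · rw [Set.mem_singleton_iff.mp ha]
            exact ht (Or.inr rfl)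
    _ = lowerBounds (upperBounds (lowerBounds {c x, x} ∪ lowerBounds {y, x})) := key
    _ = lowerBounds (upperBounds (lowerBounds {y, x})) := by rw [h1, hzmem]
    _ = lowerBounds {y, x} := hLUL _
    _ = lowerBounds {x, y} := by rw [Set.pair_comm]
end

section
/- In a poset (P,≤,',0,1) with complementation, the two identities L(U(L(x,y),y'),y) = L(x,y) and U(L(U(x,y),y'),y) = U(x,y) are equivalent (each implies the other, using the De Morgan laws). -/
section Aux
variable {P : Type*} [PartialOrder P] (c : P → P)

lemma aux_lb_img (anti : ∀ x y : P, x ≤ y → c y ≤ c x) (inv : ∀ x : P, c (c x) = x)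
    (S : Set P) : c '' lowerBounds S = upperBounds (c '' S) := by
  ext x
  constructor
  · rintro ⟨w, hw, rfl⟩ a ⟨s, hs, rfl⟩
    exact anti _ _ (hw hs)
  · intro hx
    refine ⟨c x, fun s hs => ?_, inv x⟩
    have h1 : c s ≤ x := hx ⟨s, hs, rfl⟩
    have h2 := anti _ _ h1
    rwa [inv] at h2

lemma aux_ub_img (anti : ∀ x y : P, x ≤ y → c y ≤ c x) (inv : ∀ x : P, c (c x) = x)
    (S : Set P) : c '' upperBounds S = lowerBounds (c '' S) := by
  ext x
  constructor
  · rintro ⟨w, hw, rfl⟩ a ⟨s, hs, rfl⟩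
    exact anti _ _ (hw hs)
  · intro hx
    refine ⟨c x, fun s hs => ?_, inv x⟩
    have h1 : x ≤ c s := hx ⟨s, hs, rfl⟩
    have h2 := anti _ _ h1
    rwa [inv] at h2

end Aux

/-- In a poset with complementation, the two defining identities of
pseudo-orthomodularity are equivalent. -/
theorem stmt_12 {P : Type*} [PartialOrder P] (c : P → P) (z o : P)
    (hbot : ∀ x : P, z ≤ x) (htop : ∀ x : P, x ≤ o)
    (anti : ∀ x y : P, x ≤ y → c y ≤ c x) (inv : ∀ x : P, c (c x) = x)
    (hL : ∀ x : P, lowerBounds {x, c x} = {z})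
    (hU : ∀ x : P, upperBounds {x, c x} = {o}) :
    (∀ x y : P,
      lowerBounds (upperBounds (lowerBounds {x, y} ∪ {c y}) ∪ {y}) = lowerBounds {x, y}) ↔
    (∀ x y : P,
      upperBounds (lowerBounds (upperBounds {x, y} ∪ {c y}) ∪ {y}) = upperBounds {x, y}) := by
  constructor
  · intro h x y
    have h' := h (c x) (c y)
    rw [inv] at h'
    have h2 := congrArg (Set.image c) h'
    rw [aux_lb_img c anti inv, aux_lb_img c anti inv, Set.image_union,
      Set.image_singleton, aux_ub_img c anti inv, Set.image_union,
      Set.image_singleton, inv, aux_lb_img c anti inv, Set.image_pair, inv, inv] at h2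
    exact h2
  · intro h x y
    have h' := h (c x) (c y)
    rw [inv] at h'
    have h2 := congrArg (Set.image c) h'
    rw [aux_ub_img c anti inv, aux_ub_img c anti inv, Set.image_union,
      Set.image_singleton, aux_lb_img c anti inv, Set.image_union,
      Set.image_singleton, inv, aux_ub_img c anti inv, Set.image_pair, inv, inv] at h2
    exact h2
end

section
/- In every bounded poset (P,≤,',0,1) with complementation, the inclusions L(x,y) ⊆ L(U(L(x,y),y'),y) and U(x,y) ⊆ U(L(U(x,y),y'),y) hold for all x,y ∈ P. -/
/-- In every bounded poset with complementation, `L(x,y) ⊆ L(U(L(x,y),y'),y)` and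
`U(x,y) ⊆ U(L(U(x,y),y'),y)`. -/
theorem stmt_13 {P : Type*} [PartialOrder P] (c : P → P) (z o : P)
    (hbot : ∀ x : P, z ≤ x) (htop : ∀ x : P, x ≤ o)
    (anti : ∀ x y : P, x ≤ y → c y ≤ c x) (inv : ∀ x : P, c (c x) = x)
    (hL : ∀ x : P, lowerBounds {x, c x} = {z})
    (hU : ∀ x : P, upperBounds {x, c x} = {o})
    (x y : P) :
    lowerBounds {x, y} ⊆
      lowerBounds (upperBounds (lowerBounds {x, y} ∪ {c y}) ∪ {y}) ∧
    upperBounds {x, y} ⊆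
      upperBounds (lowerBounds (upperBounds {x, y} ∪ {c y}) ∪ {y}) := by
  constructor
  · intro a ha b hb
    rcases hb with hb | hb
    · exact hb (Or.inl ha)
    · exact ha (Or.inr (Set.mem_singleton_iff.mp hb))
  · intro a ha b hb
    rcases hb with hb | hb
    · exact hb (Or.inl ha)
    · exact le_trans (Set.mem_singleton_iff.mp hb ▸ ha (Or.inr rfl)) le_rfl
end

section
/- Every Boolean poset satisfies the pseudo-Boolean identity L(U(x,y),y') = L(x,y') for all x,y. -/
/-- Every Boolean poset satisfies the pseudo-Boolean identity
`L(U(x,y),y') = L(x,y')`. -/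
theorem stmt_15 {P : Type*} [PartialOrder P] (c : P → P) (z o : P)
    (hbot : ∀ x : P, z ≤ x) (htop : ∀ x : P, x ≤ o)
    (anti : ∀ x y : P, x ≤ y → c y ≤ c x) (inv : ∀ x : P, c (c x) = x)
    (hL : ∀ x : P, lowerBounds {x, c x} = {z})
    (hU : ∀ x : P, upperBounds {x, c x} = {o})
    (hdist : ∀ x y w : P,
      lowerBounds (upperBounds {x, y} ∪ {w}) =
        lowerBounds (upperBounds (lowerBounds {x, w} ∪ lowerBounds {y, w})))
    (x y : P) :
    lowerBounds (upperBounds {x, y} ∪ {c y}) = lowerBounds {x, c y} := by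
  rw [hdist x y (c y), hL y]
  have hz : (lowerBounds {x, c y} ∪ {z} : Set P) ⊆ lowerBounds {x, c y} ∪ {z} := le_refl _
  have hub : upperBounds (lowerBounds {x, c y} ∪ {z}) = upperBounds (lowerBounds {x, c y}) := by
    apply subset_antisymm
    · exact upperBounds_mono_set (Set.subset_union_left)
    · intro u hu t ht
      rcases ht with ht | ht
      · exact hu ht
      · simp only [Set.mem_singleton_iff] at ht; subst ht; exact hbot u
  rw [hub]
  apply subset_antisymm
  · intro a ha t ht
    exact ha (fun b hb => hb ht)
  · intro a ha u hu
    exact hu ha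
end

section
/- The horizontal sum of a family of pseudo-orthomodular posets (each of cardinality > 2, pairwise intersecting exactly in {0,1}) is pseudo-orthomodular. -/
/-- Lower cone of a subset `A` computed within a block `B`. -/
def relL {P : Type*} [PartialOrder P] (B A : Set P) : Set P :=
  {x ∈ B | ∀ y ∈ A, x ≤ y}

/-- Upper cone of a subset `A` computed within a block `B`. -/
def relU {P : Type*} [PartialOrder P] (B A : Set P) : Set P :=
  {x ∈ B | ∀ y ∈ A, y ≤ x}

/-- The horizontal sum of a family of pseudo-orthomodular posets (each of
cardinality `> 2`, pairwise intersecting exactly in `{0,1}`) is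
pseudo-orthomodular.  Here the poset `P` with blocks `B i` is the horizontal sum:
the blocks cover `P`, each contains `0` and `1`, comparable elements lie in a
common block, and each block is closed under the complementation `c` and is a
pseudo-orthomodular poset with respect to the relative cone operators. -/
theorem stmt_16 {P : Type*} [PartialOrder P] {ι : Type*} (B : ι → Set P)
    (c : P → P) (z o : P) (hzo : z ≠ o)
    (hcover : ∀ x : P, ∃ i, x ∈ B i)
    (hz : ∀ i, z ∈ B i) (ho : ∀ i, o ∈ B i)
    (hcard : ∀ i, 2 < (B i).encard)
    (hdisj : ∀ i j, i ≠ j → B i ∩ B j = {z, o})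
    (hblock : ∀ x y : P, x ≤ y → ∃ i, x ∈ B i ∧ y ∈ B i)
    (hcclosed : ∀ i, ∀ x ∈ B i, c x ∈ B i)
    (hcz : c z = o) (hco : c o = z)
    (hbot : ∀ i, ∀ x ∈ B i, z ≤ x) (htop : ∀ i, ∀ x ∈ B i, x ≤ o)
    (anti : ∀ x y : P, x ≤ y → c y ≤ c x) (inv : ∀ x : P, c (c x) = x)
    (hLc : ∀ i, ∀ x ∈ B i, relL (B i) {x, c x} = {z})
    (hUc : ∀ i, ∀ x ∈ B i, relU (B i) {x, c x} = {o})
    (hpom : ∀ i, ∀ x ∈ B i, ∀ y ∈ B i,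
      relL (B i) (relU (B i) (relL (B i) {x, y} ∪ {c y}) ∪ {y}) = relL (B i) {x, y}) :
    ∀ x y : P,
      lowerBounds (upperBounds (lowerBounds {x, y} ∪ {c y}) ∪ {y}) =
        lowerBounds {x, y} := by
  -- basic global bounds
  have hz' : ∀ t : P, z ≤ t := fun t => (hcover t).elim (fun i hi => hbot i t hi)
  have ho' : ∀ t : P, t ≤ o := fun t => (hcover t).elim (fun i hi => htop i t hi)
  -- block set uniqueness for non-{z,o} elements
  have huniq : ∀ {a : P} {i j : ι}, a ∈ B i → a ∈ B j → a ≠ z → a ≠ o → B i = B j := by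
    intro a i j hi hj haz hao
    by_contra hne
    have hij : i ≠ j := fun h => hne (by rw [h])
    have hmem : a ∈ B i ∩ B j := ⟨hi, hj⟩
    rw [hdisj i j hij] at hmem
    rcases hmem with h | h
    · exact haz h
    · exact hao h
  -- global: lower bounds of {w, c w} are only z
  have Lycy : ∀ w t : P, t ≤ w → t ≤ c w → t = z := by
    intro w t h1 h2
    rcases hcover w with ⟨i, hwi⟩
    by_cases hwz : w = z
    · exact le_antisymm (hwz ▸ h1) (hz' t)
    by_cases hwo : w = o
    · have hcw : c w = z := by rw [hwo, hco]
      exact le_antisymm (hcw ▸ h2) (hz' t)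
    obtain ⟨j, htj, hwj⟩ := hblock t w h1
    have hBji : B j = B i := huniq hwj hwi hwz hwo
    have hti : t ∈ B i := hBji ▸ htj
    have hmem : t ∈ relL (B i) {w, c w} := by
      refine ⟨hti, ?_⟩
      intro u hu
      rcases hu with rfl | hu
      · exact h1
      · rw [Set.mem_singleton_iff] at hu; rw [hu]; exact h2
    rw [hLc i w hwi] at hmem
    exact hmem
  intro x y
  apply Set.Subset.antisymm
  · -- hard direction
    intro t ht
    have hty : t ≤ y := ht (Set.mem_union_right _ rfl)
    have htU : ∀ u, u ∈ upperBounds (lowerBounds {x, y} ∪ {c y}) → t ≤ u :=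
      fun u hu => ht (Set.mem_union_left _ hu)
    intro a ha
    rcases ha with rfl | ha
    · -- show t ≤ a where a = x
      by_cases hxo : a = o
      · rw [hxo]; exact ho' t
      by_cases hyz : y = z
      · exact le_trans (le_trans hty (le_of_eq hyz)) (hz' a)
      by_cases hyo : y = o
      · -- a itself is an upper bound of lowerBounds {a,y} ∪ {c y}
        refine htU a ?_
        intro s hs
        rcases hs with hs | hs
        · exact hs (Set.mem_insert a _)
        · rw [Set.mem_singleton_iff] at hs
          rw [hs, hyo, hco]; exact hz' a
      by_cases hxz : a = z
      · have htcy : t ≤ c y := by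
          refine htU (c y) ?_
          intro s hs
          rcases hs with hs | hs
          · exact le_trans (le_trans (hs (Set.mem_insert a _)) (le_of_eq hxz)) (hz' (c y))
          · rw [Set.mem_singleton_iff] at hs; rw [hs]
        have htz := Lycy y t hty htcy
        exact le_trans (le_of_eq htz) (le_of_eq hxz.symm)
      by_cases hcom : ∃ i, a ∈ B i ∧ y ∈ B i
      · obtain ⟨i, hxi, hyi⟩ := hcom
        -- y's block is B i; lower bounds of things ≤ y land in B i
        have hyBi : ∀ s : P, s ≤ y → s ∈ B i := by
          intro s hsy
          obtain ⟨j, hsj, hyj⟩ := hblock s y hsy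
          have : B j = B i := huniq hyj hyi hyz hyo
          exact this ▸ hsj
        have hti : t ∈ B i := hyBi t hty
        have hmem : t ∈ relL (B i) (relU (B i) (relL (B i) {a, y} ∪ {c y}) ∪ {y}) := by
          refine ⟨hti, ?_⟩
          intro u hu
          rcases hu with hu | hu
          · -- u is a relative upper bound; it is a global upper bound too
            obtain ⟨huBi, huU⟩ := hu
            refine htU u ?_
            intro s hs
            rcases hs with hs | hs
            · -- s global lower bound of {a, y}
              have hsy : s ≤ y := hs (Set.mem_insert_of_mem _ rfl)
              have hsx : s ≤ a := hs (Set.mem_insert a _)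
              exact huU s (Set.mem_union_left _ ⟨hyBi s hsy, by
                intro v hv
                rcases hv with rfl | hv
                · exact hsx
                · rw [Set.mem_singleton_iff] at hv; rw [hv]; exact hsy⟩)
            · exact huU s (Set.mem_union_right _ hs)
          · rw [Set.mem_singleton_iff] at hu; rw [hu]; exact hty
        rw [hpom i a hxi y hyi] at hmem
        exact hmem.2 a (Set.mem_insert a _)
      · -- no common block: every lower bound of {a,y} is z
        have hSz : ∀ s : P, s ∈ lowerBounds {a, y} → s = z := by
          intro s hs
          have hsx : s ≤ a := hs (Set.mem_insert a _)
          have hsy : s ≤ y := hs (Set.mem_insert_of_mem _ rfl)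
          obtain ⟨j, hsj, hxj⟩ := hblock s a hsx
          obtain ⟨k, hsk, hyk⟩ := hblock s y hsy
          by_cases hjk : B j = B k
          · exact absurd ⟨j, hxj, by rw [hjk]; exact hyk⟩ hcom
          · have hjk' : j ≠ k := fun h => hjk (by rw [h])
            have hmem : s ∈ B j ∩ B k := ⟨hsj, hsk⟩
            rw [hdisj j k hjk'] at hmem
            rcases hmem with h | h
            · exact h
            · exfalso; exact hxo (le_antisymm (ho' a) (h ▸ hsx))
        have htcy : t ≤ c y := by
          refine htU (c y) ?_
          intro s hs
          rcases hs with hs | hs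
          · rw [hSz s hs]; exact hz' (c y)
          · rw [Set.mem_singleton_iff] at hs; rw [hs]
        exact le_trans (le_of_eq (Lycy y t hty htcy)) (hz' a)
    · rw [Set.mem_singleton_iff] at ha; rw [ha]; exact hty
  · -- easy direction
    intro t ht a ha
    rcases ha with ha | ha
    · exact ha (Set.mem_union_left _ ht)
    · rw [Set.mem_singleton_iff] at ha
      rw [ha]; exact ht (Set.mem_insert_of_mem _ rfl)
end

section
/- Every orthogonal pseudo-orthomodular poset is orthomodular: if a ≤ b then (a ∨ b') ∧ b exists and equals a. -/
/-- Every orthogonal pseudo-orthomodular poset is orthomodular: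
if `a ≤ b` then `a ∨ b'` exists and `(a ∨ b') ∧ b = a`. -/
theorem stmt_17 {P : Type*} [PartialOrder P] (c : P → P) (z o : P)
    (hbot : ∀ x : P, z ≤ x) (htop : ∀ x : P, x ≤ o)
    (anti : ∀ x y : P, x ≤ y → c y ≤ c x) (inv : ∀ x : P, c (c x) = x)
    (hL : ∀ x : P, lowerBounds {x, c x} = {z})
    (hU : ∀ x : P, upperBounds {x, c x} = {o})
    (horth : ∀ x y : P, x ≤ c y → ∃ s : P, IsLUB {x, y} s)
    (hpom : ∀ x y : P,
      lowerBounds (upperBounds (lowerBounds {x, y} ∪ {c y}) ∪ {y}) = lowerBounds {x, y})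
    (a b : P) (hab : a ≤ b) :
    ∃ s : P, IsLUB {a, c b} s ∧ IsGLB {s, b} a := by
  have hacb : a ≤ c (c b) := by rw [inv]; exact hab
  obtain ⟨s, hs⟩ := horth a (c b) hacb
  refine ⟨s, hs, ?_⟩
  have has : a ≤ s := hs.1 (Set.mem_insert _ _)
  have h1 : lowerBounds ({a, b} : Set P) = Set.Iic a := by
    ext t
    constructor
    · intro h; exact h (Set.mem_insert _ _)
    · intro h x hx
      rcases hx with rfl | hx
      · exact h
      · rcases hx with rfl
        exact le_trans h hab
  have h2 : upperBounds (Set.Iic a ∪ {c b}) = upperBounds ({a, c b} : Set P) := by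
    ext u
    constructor
    · intro h x hx
      rcases hx with rfl | hx
      · exact h (Set.mem_union_left _ le_rfl)
      · rcases hx with rfl
        exact h (Set.mem_union_right _ rfl)
    · intro h x hx
      rcases hx with hx | hx
      · exact le_trans hx (h (Set.mem_insert _ _))
      · rcases hx with rfl
        exact h (Set.mem_insert_of_mem _ rfl)
  have h3 : upperBounds ({a, c b} : Set P) = Set.Ici s := hs.upperBounds_eq
  have h4 : lowerBounds (Set.Ici s ∪ {b}) = lowerBounds ({s, b} : Set P) := by
    ext t
    constructor
    · intro h x hx
      rcases hx with rfl | hx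
      · exact h (Set.mem_union_left _ le_rfl)
      · rcases hx with rfl
        exact h (Set.mem_union_right _ rfl)
    · intro h x hx
      rcases hx with hx | hx
      · exact le_trans (h (Set.mem_insert _ _)) hx
      · rcases hx with rfl
        exact h (Set.mem_insert_of_mem _ rfl)
  have key := hpom a b
  rw [h1, h2, h3, h4] at key
  constructor
  · rintro x (rfl | hx)
    · exact has
    · rcases hx with rfl
      exact hab
  · intro t ht
    rw [key] at ht
    exact ht
end

section
/- Every orthogonal modular poset with complementation is orthomodular: if a ≤ b then a ∨ b' exists, (a ∨ b') ∧ b exists, and (a ∨ b') ∧ b = a. -/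
/-- Every orthogonal modular poset with complementation is orthomodular:
if `a ≤ b` then `a ∨ b'` exists, `(a ∨ b') ∧ b` exists and equals `a`. -/
theorem stmt_18 {P : Type*} [PartialOrder P] (c : P → P) (z o : P)
    (hbot : ∀ x : P, z ≤ x) (htop : ∀ x : P, x ≤ o)
    (anti : ∀ x y : P, x ≤ y → c y ≤ c x) (inv : ∀ x : P, c (c x) = x)
    (hL : ∀ x : P, lowerBounds {x, c x} = {z})
    (hU : ∀ x : P, upperBounds {x, c x} = {o})
    (horth : ∀ x y : P, x ≤ c y → ∃ s : P, IsLUB {x, y} s)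
    (hmod : ∀ x y w : P, x ≤ w →
      lowerBounds (upperBounds {x, y} ∪ {w}) =
        lowerBounds (upperBounds ({x} ∪ lowerBounds {y, w})))
    (a b : P) (hab : a ≤ b) :
    ∃ s : P, IsLUB {a, c b} s ∧ IsGLB {s, b} a := by
  obtain ⟨s, hs⟩ := horth a (c b) (by rw [inv]; exact hab)
  refine ⟨s, hs, ?_⟩
  have key := hmod a (c b) b hab
  have h1 : lowerBounds ({c b, b} : Set P) = {z} := by
    have := hL (c b); rwa [inv] at this
  rw [h1] at key
  have h2 : ({a} ∪ {z} : Set P) = {a, z} := rfl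
  rw [h2] at key
  have h3 : upperBounds ({a, z} : Set P) = Set.Ici a := by
    ext t
    constructor
    · intro ht; exact ht (Set.mem_insert a _)
    · intro ht u hu
      rcases hu with rfl | hu
      · exact ht
      · simp only [Set.mem_singleton_iff] at hu; subst hu; exact hbot t
  rw [h3] at key
  have h4 : lowerBounds (Set.Ici a) = Set.Iic a := by
    ext t
    constructor
    · intro ht; exact ht (Set.mem_Ici.2 le_rfl)
    · intro ht u hu; exact le_trans ht hu
  rw [h4] at key
  have h5 : upperBounds ({a, c b} : Set P) = Set.Ici s := by
    ext t
    constructor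
    · intro ht; exact hs.2 ht
    · intro ht u hu
      exact le_trans (hs.1 hu) ht
  rw [h5] at key
  have h6 : lowerBounds (Set.Ici s ∪ {b}) = lowerBounds ({s, b} : Set P) := by
    ext t
    constructor
    · intro ht u hu
      rcases hu with rfl | hu
      · exact ht (Or.inl (Set.mem_Ici.2 le_rfl))
      · simp only [Set.mem_singleton_iff] at hu; subst hu
        exact ht (Or.inr rfl)
    · intro ht u hu
      rcases hu with hu | hu
      · exact le_trans (ht (Set.mem_insert s _)) hu
      · simp only [Set.mem_singleton_iff] at hu; subst hu
        exact ht (Or.inr rfl)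
  rw [h6] at key
  constructor
  · show a ∈ lowerBounds {s, b}
    rw [key]; exact Set.mem_Iic.2 le_rfl
  · intro t ht
    rw [key] at ht
    exact ht
end

section
/- Let (P,≤,',0,1) be a pseudo-orthomodular poset and define M(x,y) := L(U(x,y'),y) and R(x,y) := L(U(L(x,y),x')). Then (P,≤,',M,R,0,1) is an operator left residuated poset: M(x,1) = M(1,x) = L(x); R(x,y) = P iff x ≤ y; M(a,b) ⊆ L(c) iff L(a) ⊆ R(b,c); and R(x,0) = L(x'). -/
section Aux

variable {P : Type*} [PartialOrder P] {c : P → P}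

/-- Lower bounds of the image under an antitone involution are the image of upper bounds. -/
lemma aux_lb_image (anti : ∀ x y : P, x ≤ y → c y ≤ c x) (inv : ∀ x : P, c (c x) = x)
    (S : Set P) : lowerBounds (c '' S) = c '' upperBounds S := by
  ext p
  constructor
  · intro hp
    refine ⟨c p, ?_, inv p⟩
    intro s hs
    have h1 : p ≤ c s := hp (Set.mem_image_of_mem c hs)
    have h2 := anti _ _ h1
    rwa [inv] at h2
  · rintro ⟨u, hu, rfl⟩ q ⟨s, hs, rfl⟩
    exact anti _ _ (hu hs)

/-- Upper bounds of the image under an antitone involution are the image of lower bounds. -/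
lemma aux_ub_image (anti : ∀ x y : P, x ≤ y → c y ≤ c x) (inv : ∀ x : P, c (c x) = x)
    (S : Set P) : upperBounds (c '' S) = c '' lowerBounds S := by
  ext p
  constructor
  · intro hp
    refine ⟨c p, ?_, inv p⟩
    intro s hs
    have h1 : c s ≤ p := hp (Set.mem_image_of_mem c hs)
    have h2 := anti _ _ h1
    rwa [inv] at h2
  · rintro ⟨u, hu, rfl⟩ q ⟨s, hs, rfl⟩
    exact anti _ _ (hu hs)

/-- Dual of the pseudo-orthomodular law. -/
lemma aux_hpom_dual (anti : ∀ x y : P, x ≤ y → c y ≤ c x) (inv : ∀ x : P, c (c x) = x)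
    (hpom : ∀ x y : P,
      lowerBounds (upperBounds (lowerBounds {x, y} ∪ {c y}) ∪ {y}) = lowerBounds {x, y})
    (x y : P) :
    upperBounds (lowerBounds (upperBounds {x, y} ∪ {c y}) ∪ {y}) = upperBounds {x, y} := by
  have cinj : Function.Injective c := Function.LeftInverse.injective inv
  have h := hpom (c x) (c y)
  rw [inv] at h
  have e1 : ({c x, c y} : Set P) = c '' {x, y} := (Set.image_pair c x y).symm
  rw [e1, aux_lb_image anti inv] at h
  have e2 : (c '' upperBounds {x, y}) ∪ {y} = c '' (upperBounds {x, y} ∪ {c y}) := by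
    rw [Set.image_union, Set.image_singleton, inv]
  rw [e2, aux_ub_image anti inv] at h
  have e3 : (c '' lowerBounds (upperBounds {x, y} ∪ {c y})) ∪ {c y}
      = c '' (lowerBounds (upperBounds {x, y} ∪ {c y}) ∪ {y}) := by
    rw [Set.image_union, Set.image_singleton]
  rw [e3, aux_lb_image anti inv] at h
  exact Set.image_injective.mpr cinj h

end Aux

/-- Every pseudo-orthomodular poset becomes an operator left residuated poset via
`M(x,y) := L(U(x,y'),y)` and `R(x,y) := L(U(L(x,y),x'))`. -/
theorem stmt_19 {P : Type*} [PartialOrder P] (c : P → P) (z o : P)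
    (hbot : ∀ x : P, z ≤ x) (htop : ∀ x : P, x ≤ o)
    (anti : ∀ x y : P, x ≤ y → c y ≤ c x) (inv : ∀ x : P, c (c x) = x)
    (hL : ∀ x : P, lowerBounds {x, c x} = {z})
    (hU : ∀ x : P, upperBounds {x, c x} = {o})
    (hpom : ∀ x y : P,
      lowerBounds (upperBounds (lowerBounds {x, y} ∪ {c y}) ∪ {y}) = lowerBounds {x, y})
    (M R : P → P → Set P)
    (hM : ∀ x y : P, M x y = lowerBounds (upperBounds {x, c y} ∪ {y}))
    (hR : ∀ x y : P, R x y = lowerBounds (upperBounds (lowerBounds {x, y} ∪ {c x}))) :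
    (∀ x : P, M x o = lowerBounds {x} ∧ M o x = lowerBounds {x}) ∧
    (∀ x y : P, R x y = Set.univ ↔ x ≤ y) ∧
    (∀ a b w : P, M a b ⊆ lowerBounds {w} ↔ lowerBounds {a} ⊆ R b w) ∧
    (∀ x : P, R x z = lowerBounds {c x}) := by
  -- `c o = z`
  have hco : c o = z := by
    have h1 : c o ∈ lowerBounds ({o, c o} : Set P) := by
      intro q hq
      rcases hq with rfl | rfl
      · exact htop _
      · exact le_refl _
    rw [hL o] at h1
    exact h1
  refine ⟨?_, ?_, ?_, ?_⟩
  · -- part 1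
    intro x
    constructor
    · rw [hM, hco]
      ext p
      simp only [lowerBounds, upperBounds, Set.mem_union, Set.mem_insert_iff,
        Set.mem_singleton_iff, Set.mem_setOf_eq]
      constructor
      · intro hp
        intro q hq
        subst hq
        exact hp (Or.inl (fun r hr => by rcases hr with rfl | rfl; exact le_refl _; exact hbot _))
      · intro hp q hq
        have hpx : p ≤ x := hp rfl
        rcases hq with hq | rfl
        · exact le_trans hpx (hq (Or.inl rfl))
        · exact htop _
    · rw [hM]
      ext p
      simp only [lowerBounds, upperBounds, Set.mem_union, Set.mem_insert_iff,
        Set.mem_singleton_iff, Set.mem_setOf_eq]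
      constructor
      · intro hp q hq
        subst hq
        exact hp (Or.inr rfl)
      · intro hp q hq
        have hpx : p ≤ x := hp rfl
        rcases hq with hq | rfl
        · exact le_trans (htop p) (hq (Or.inl rfl))
        · exact hpx
  · -- part 2
    intro x y
    constructor
    · intro h
      -- the upper bound set is `{o}`
      have hUo : upperBounds (lowerBounds ({x, y} : Set P) ∪ {c x}) = {o} := by
        apply Set.eq_singleton_iff_unique_mem.mpr
        constructor
        · intro q _; exact htop q
        · intro q hq
          have ho : o ∈ R x y := by rw [h]; trivial
          rw [hR] at ho
          exact le_antisymm (htop q) (ho hq)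
      have h2 := hpom y x
      rw [Set.pair_comm y x, hUo] at h2
      have hx : x ∈ lowerBounds ({x, y} : Set P) := by
        rw [← h2]
        intro q hq
        rcases hq with rfl | rfl
        · exact htop _
        · exact le_refl _
      exact hx (Or.inr rfl)
    · intro hxy
      rw [hR]
      have hUxy : upperBounds (lowerBounds ({x, y} : Set P) ∪ {c x}) = {o} := by
        rw [← hU x]
        ext q
        simp only [upperBounds, Set.mem_union, Set.mem_insert_iff, Set.mem_singleton_iff,
          Set.mem_setOf_eq]
        constructor
        · intro hq r hr
          rcases hr with rfl | rfl
          · exact hq (Or.inl (fun s hs => by rcases hs with rfl | rfl; exact le_refl _; exact hxy))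
          · exact hq (Or.inr rfl)
        · intro hq r hr
          rcases hr with hr | rfl
          · exact le_trans (hr (Or.inl rfl)) (hq (Or.inl rfl))
          · exact hq (Or.inr rfl)
      rw [hUxy]
      apply Set.eq_univ_iff_forall.mpr
      intro p q hq
      rcases hq with rfl
      exact htop p
  · -- part 3: adjointness
    intro a b w
    have hdual := aux_hpom_dual anti inv hpom a (c b)
    rw [inv] at hdual
    constructor
    · intro h
      intro p hp
      have hpa : p ≤ a := hp rfl
      rw [hR]
      intro q hq
      -- show `a ≤ q`, then `p ≤ q`
      have hMsub : M a b ⊆ lowerBounds ({a, c b} ∪ {b} : Set P) → True := fun _ => trivial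
      have hq' : q ∈ upperBounds (lowerBounds (upperBounds ({a, c b} : Set P) ∪ {b}) ∪ {c b}) := by
        intro r hr
        rcases hr with hr | rfl
        · -- r ∈ M a b (as a set), show r ≤ q using M a b ⊆ L{b,w}
          have hrM : r ∈ M a b := by rw [hM]; exact hr
          have hrw : r ≤ w := h hrM rfl
          have hrb : r ≤ b := hr (Or.inr rfl)
          refine hq (Or.inl ?_)
          intro s hs
          rcases hs with rfl | rfl
          · exact hrb
          · exact hrw
        · exact hq (Or.inr rfl)
      rw [hdual] at hq'
      exact le_trans hpa (hq' (Or.inl rfl))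
    · intro h
      have haR : a ∈ R b w := h (fun q hq => by rw [Set.mem_singleton_iff] at hq; exact le_of_eq hq.symm)
      rw [hR] at haR
      intro p hp
      rw [hM] at hp
      have h2 := hpom w b
      have hpL : p ∈ lowerBounds ({w, b} : Set P) := by
        rw [← h2]
        intro q hq
        rcases hq with hq | rfl
        · -- q ∈ U(L{w,b} ∪ {c b}); show q ∈ U{a, c b} hence p ≤ q
          have hqa : a ≤ q := by
            apply haR
            intro r hr
            rcases hr with hr | rfl
            · exact hq (Or.inl (by rwa [Set.pair_comm b w] at hr))
            · exact hq (Or.inr rfl)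
          refine hp (Or.inl ?_)
          intro s hs
          rcases hs with rfl | rfl
          · exact hqa
          · exact hq (Or.inr rfl)
        · exact hp (Or.inr rfl)
      intro q hq
      rcases hq with rfl
      exact hpL (Or.inl rfl)
  · -- part 4
    intro x
    rw [hR]
    have hLxz : lowerBounds ({x, z} : Set P) = {z} := by
      apply Set.eq_singleton_iff_unique_mem.mpr
      refine ⟨fun q hq => by rcases hq with rfl | rfl; exact hbot _; exact le_refl _, ?_⟩
      intro q hq
      exact le_antisymm (hq (Or.inr rfl)) (hbot q)
    rw [hLxz]
    ext p
    simp only [lowerBounds, upperBounds, Set.mem_union, Set.mem_singleton_iff, Set.mem_setOf_eq]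
    constructor
    · intro hp q hq
      subst hq
      exact hp (fun r hr => by rcases hr with hr | rfl; exacts [hr ▸ hbot _, le_refl _])
    · intro hp q hq
      exact le_trans (hp rfl) (hq (Or.inr rfl))
end
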